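/- Let Ω = exp(i(βφ/4)σ₃) and define Û = Ω⁻¹ U Ω - Ω⁻¹ ∂ₓΩ where U is the sine-Gordon space Lax matrix. Then Û = -i(β/4)(φₓ + π)σ₃ - iλ(m/4)σ₂ + i(m/(4λ)) Ω⁻² σ₂ Ω². -/

import Mathlib

open Matrix Complex

noncomputable section

def σ1 : Matrix (Fin 2) (Fin 2) ℂ := !![0, 1; 1, 0]
def σ2 : Matrix (Fin 2) (Fin 2) ℂ := !![0, -I; I, 0]
def σ3 : Matrix (Fin 2) (Fin 2) ℂ := !![1, 0; 0, -1]

def k0 (m : ℝ) (l : ℂ) : ℂ := (m / 4 : ℂ) * (l + 1 / l)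
def k1 (m : ℝ) (l : ℂ) : ℂ := (m / 4 : ℂ) * (l - 1 / l)

/-- Entrywise derivative of a matrix-valued function of one real variable. -/
def Mderiv (F : ℝ → Matrix (Fin 2) (Fin 2) ℂ) (s : ℝ) : Matrix (Fin 2) (Fin 2) ℂ :=
  Matrix.of fun i j => deriv (fun u => F u i j) s

/-- `Ω = exp(i(βφ/4)σ₃) = diag(e^{iβφ/4}, e^{-iβφ/4})`. -/
def Om (β : ℝ) (φ : ℝ → ℝ) (x : ℝ) : Matrix (Fin 2) (Fin 2) ℂ :=
  !![Complex.exp (I * (β * φ x / 4)), 0; 0, Complex.exp (-(I * (β * φ x / 4)))]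

/-- The sine-Gordon space Lax matrix, with the fields at fixed time viewed as functions of `x`. -/
def ULax (m β : ℝ) (φ piF : ℝ → ℝ) (x : ℝ) (l : ℂ) : Matrix (Fin 2) (Fin 2) ℂ :=
  (-(I * (β / 4) * (piF x))) • σ3
    - (I * k0 m l * (Real.sin (β * φ x / 2) : ℂ)) • σ1
    - (I * k1 m l * (Real.cos (β * φ x / 2) : ℂ)) • σ2

set_option maxHeartbeats 1000000 in
/-- The gauge-transformed Lax matrix
`Û = Ω⁻¹ U Ω - Ω⁻¹ ∂ₓΩ = -i(β/4)(φₓ + π)σ₃ - iλ(m/4)σ₂ + i(m/(4λ)) Ω⁻² σ₂ Ω²`. -/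
theorem stmt4 (m β : ℝ) (hβ : β ≠ 0) (φ piF : ℝ → ℝ)
    (hφ : ContDiff ℝ (⊤ : ℕ∞) φ) (hpi : ContDiff ℝ (⊤ : ℕ∞) piF) :
    ∀ (l : ℂ), l ≠ 0 → ∀ x : ℝ,
      (Om β φ x)⁻¹ * ULax m β φ piF x l * Om β φ x - (Om β φ x)⁻¹ * Mderiv (Om β φ) x
        = (-(I * (β / 4) * ((deriv φ x + piF x) : ℝ))) • σ3
          + (-(I * l * (m / 4))) • σ2
          + (I * (m / (4 * l))) • (((Om β φ x) ^ 2)⁻¹ * σ2 * (Om β φ x) ^ 2) := by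
  intro l hl x
  obtain ⟨c, hc⟩ : ∃ c : ℂ, c = I * ((β : ℂ) * ((φ x : ℝ) : ℂ) / 4) := ⟨_, rfl⟩
  have hE : Complex.exp c ≠ 0 := Complex.exp_ne_zero _
  have hOm : Om β φ x = !![Complex.exp c, 0; 0, Complex.exp (-c)] := by rw [hc]; rfl
  -- inverse
  have hInv : (Om β φ x)⁻¹ = !![Complex.exp (-c), 0; 0, Complex.exp c] := by
    apply Matrix.inv_eq_left_inv
    rw [hOm]
    ext i j
    fin_cases i <;> fin_cases j <;>
      simp [Matrix.mul_apply, Fin.sum_univ_two, ← Complex.exp_add]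
  -- square and its inverse
  have hSq : (Om β φ x) ^ 2 = !![Complex.exp (2*c), 0; 0, Complex.exp (-(2*c))] := by
    rw [sq, hOm]
    ext i j
    fin_cases i <;> fin_cases j <;>
      simp [Matrix.mul_apply, Fin.sum_univ_two, ← Complex.exp_add, two_mul]
  have hSqInv : ((Om β φ x) ^ 2)⁻¹ = !![Complex.exp (-(2*c)), 0; 0, Complex.exp (2*c)] := by
    apply Matrix.inv_eq_left_inv
    rw [hSq]
    ext i j
    fin_cases i <;> fin_cases j <;>
      simp [Matrix.mul_apply, Fin.sum_univ_two, ← Complex.exp_add]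
  -- derivative of Om
  have hderφ : HasDerivAt φ (deriv φ x) x := (hφ.differentiable (by simp) x).hasDerivAt
  have hd1 : HasDerivAt (fun u => Complex.exp (I * ((β : ℂ) * ((φ u : ℝ) : ℂ) / 4)))
      (I * ((β : ℂ) * ((deriv φ x : ℝ) : ℂ) / 4) * Complex.exp c) x := by
    have h0 : HasDerivAt (fun u : ℝ => (((φ u : ℝ) : ℂ))) (((deriv φ x : ℝ) : ℂ)) x :=
      hderφ.ofReal_comp
    have h1 := ((h0.const_mul (β : ℂ)).div_const 4).const_mul I
    have := h1.cexp
    simpa [hc, mul_comm, mul_assoc, mul_left_comm] using this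
  have hd2 : HasDerivAt (fun u => Complex.exp (-(I * ((β : ℂ) * ((φ u : ℝ) : ℂ) / 4))))
      (-(I * ((β : ℂ) * ((deriv φ x : ℝ) : ℂ) / 4)) * Complex.exp (-c)) x := by
    have h0 : HasDerivAt (fun u : ℝ => (((φ u : ℝ) : ℂ))) (((deriv φ x : ℝ) : ℂ)) x :=
      hderφ.ofReal_comp
    have h1 := (((h0.const_mul (β : ℂ)).div_const 4).const_mul I).neg
    have := h1.cexp
    simpa [hc, mul_comm, mul_assoc, mul_left_comm] using this
  have hMd : Mderiv (Om β φ) x =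
      !![I * ((β : ℂ) * ((deriv φ x : ℝ) : ℂ) / 4) * Complex.exp c, 0;
         0, -(I * ((β : ℂ) * ((deriv φ x : ℝ) : ℂ) / 4)) * Complex.exp (-c)] := by
    ext i j
    fin_cases i <;> fin_cases j <;>
      simp only [Mderiv, Matrix.of_apply, Om, Matrix.cons_val', Matrix.cons_val_zero,
        Matrix.cons_val_one, Matrix.head_cons, Matrix.head_fin_const, Matrix.empty_val',
        Matrix.cons_val_fin_one]
    · exact hd1.deriv
    · simp
    · simp
    · exact hd2.deriv
  -- trig to exp
  have hθ : ((β * φ x / 2 : ℝ) : ℂ) * I = 2 * c := by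
    push_cast [hc]; ring
  have hsin : ((Real.sin (β * φ x / 2) : ℝ) : ℂ)
      = (Complex.exp (2*c) - Complex.exp (-(2*c))) / (2 * I) := by
    rw [Complex.ofReal_sin]
    have h1 := Complex.exp_mul_I ((β * φ x / 2 : ℝ) : ℂ)
    have h2 := Complex.exp_mul_I (-((β * φ x / 2 : ℝ) : ℂ))
    rw [hθ] at h1
    rw [neg_mul, hθ] at h2
    rw [Complex.sin_neg, Complex.cos_neg] at h2
    rw [h1, h2]
    field_simp
    ring
  have hcos : ((Real.cos (β * φ x / 2) : ℝ) : ℂ)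
      = (Complex.exp (2*c) + Complex.exp (-(2*c))) / 2 := by
    rw [Complex.ofReal_cos]
    have h1 := Complex.exp_mul_I ((β * φ x / 2 : ℝ) : ℂ)
    have h2 := Complex.exp_mul_I (-((β * φ x / 2 : ℝ) : ℂ))
    rw [hθ] at h1
    rw [neg_mul, hθ] at h2
    rw [Complex.sin_neg, Complex.cos_neg] at h2
    rw [h1, h2]
    ring
  have h2c : Complex.exp (2*c) = Complex.exp c * Complex.exp c := by
    rw [← Complex.exp_add]; ring_nf
  have hneg : Complex.exp (-c) = (Complex.exp c)⁻¹ := Complex.exp_neg c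
  have hneg2 : Complex.exp (-(2*c)) = (Complex.exp c * Complex.exp c)⁻¹ := by
    rw [Complex.exp_neg, h2c]
  have hU : ULax m β φ piF x l =
      !![-(I * ((β:ℂ) / 4) * ((piF x : ℝ) : ℂ)),
         -(I * k0 m l * ((Real.sin (β * φ x / 2) : ℝ) : ℂ))
           - I * k1 m l * ((Real.cos (β * φ x / 2) : ℝ) : ℂ) * (-I);
         -(I * k0 m l * ((Real.sin (β * φ x / 2) : ℝ) : ℂ))
           - I * k1 m l * ((Real.cos (β * φ x / 2) : ℝ) : ℂ) * I,
         I * ((β:ℂ) / 4) * ((piF x : ℝ) : ℂ)] := by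
    ext i j
    fin_cases i <;> fin_cases j <;> simp [ULax, σ1, σ2, σ3] <;> ring
  ext i j
  rw [hSqInv, hSq, hInv, hMd, hOm, hU]
  fin_cases i <;> fin_cases j <;>
    simp only [Matrix.mul_apply, Fin.sum_univ_two, Matrix.sub_apply, Matrix.add_apply,
      Matrix.smul_apply, Matrix.cons_val_zero, Matrix.cons_val_one, Matrix.head_cons,
      Matrix.head_fin_const, Matrix.empty_val', Matrix.cons_val', Matrix.cons_val_fin_one,
      σ1, σ2, σ3, smul_eq_mul, Matrix.of_apply, hsin, hcos, k0, k1, h2c, hneg, hneg2, Fin.mk_zero, Fin.mk_one,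
      mul_zero, zero_mul, add_zero, zero_add, mul_one, mul_neg, neg_neg, sub_zero]
  · obtain ⟨E, hEeq⟩ : ∃ E, Complex.exp c = E := ⟨_, rfl⟩
    rw [hEeq] at hE ⊢
    clear hEeq hOm hInv hSq hSqInv hMd hsin hcos h2c hneg hneg2 hU hd1 hd2 hθ hc
    push_cast; field_simp; ring
  · obtain ⟨E, hEeq⟩ : ∃ E, Complex.exp c = E := ⟨_, rfl⟩
    rw [hEeq] at hE ⊢
    clear hEeq hOm hInv hSq hSqInv hMd hsin hcos h2c hneg hneg2 hU hd1 hd2 hθ hc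
    simp only [div_eq_mul_inv, mul_inv, Complex.inv_I]
    field_simp [hE, hl, Complex.I_ne_zero]
    ring_nf
    try simp only [Complex.I_sq, Complex.inv_I]
    try ring_nf
  · obtain ⟨E, hEeq⟩ : ∃ E, Complex.exp c = E := ⟨_, rfl⟩
    rw [hEeq] at hE ⊢
    clear hEeq hOm hInv hSq hSqInv hMd hsin hcos h2c hneg hneg2 hU hd1 hd2 hθ hc
    simp only [div_eq_mul_inv, mul_inv, Complex.inv_I]
    field_simp [hE, hl, Complex.I_ne_zero]
    ring_nf
    try simp only [Complex.I_sq, Complex.inv_I]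
    try ring_nf
  · obtain ⟨E, hEeq⟩ : ∃ E, Complex.exp c = E := ⟨_, rfl⟩
    rw [hEeq] at hE ⊢
    clear hEeq hOm hInv hSq hSqInv hMd hsin hcos h2c hneg hneg2 hU hd1 hd2 hθ hc
    push_cast; field_simp; ring
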